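/- arXiv:1310.4576 — 2 statements merged into one kernel-verified Lean document; each statement's English description precedes it below -/
import Mathlib

section
/- For every n ≥ 1 and all real n×n matrices A and B, there exists t ∈ [0,1] such that det A − det B = cof(tA + (1−t)B) : (A − B), where cof M denotes the cofactor matrix of M and : the Frobenius inner product. -/
open Matrix

/-- The cofactor matrix of a square matrix: the transpose of its adjugate. -/
noncomputable def cof {n : ℕ} (A : Matrix (Fin n) (Fin n) ℝ) : Matrix (Fin n) (Fin n) ℝ :=
  (Matrix.adjugate A)ᵀ

/-- The Frobenius inner product of two square matrices. -/
def frobInner {n : ℕ} (A B : Matrix (Fin n) (Fin n) ℝ) : ℝ :=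
  ∑ i, ∑ j, A i j * B i j

/-!
By Jacobi's formula, `s ↦ det (B + s • (A - B))` has derivative `trace (adj M * (A - B))` at the
point `M = B + s • (A - B)`, and this trace is `cof M : (A - B)`. The mean value theorem on `[0, 1]`
gives the result. Jacobi's formula itself comes from differentiating each term of the Leibniz
expansion with the product rule and regrouping by the differentiated column, which yields
`∑ j, det (M with column j replaced by that of A - B)`, i.e. Cramer's rule for `adj M`.
-/

namespace Matrix

variable {ι : Type*} [Fintype ι] [DecidableEq ι]

theorem prod_updateCol_perm {R : Type*} [CommMonoid R] (N : Matrix ι ι R) (j : ι) (v : ι → R)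
    (σ : Equiv.Perm ι) :
    ∏ k, N.updateCol j v (σ k) k = (∏ k ∈ Finset.univ.erase j, N (σ k) k) * v (σ j) := by
  rw [← Finset.prod_erase_mul _ _ (Finset.mem_univ j), updateCol_self]
  congr 1
  exact Finset.prod_congr rfl fun k hk => updateCol_ne (Finset.ne_of_mem_erase hk)

theorem sum_det_updateCol_eq_trace_adjugate_mul {R : Type*} [CommRing R] (N C : Matrix ι ι R) :
    ∑ j, (N.updateCol j fun i => C i j).det = (adjugate N * C).trace := by
  simp only [← cramer_apply, cramer_eq_adjugate_mulVec, trace, diag, mul_apply, mulVec, dotProduct]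

theorem hasDerivAt_det_add_smul {𝕜 : Type*} [NontriviallyNormedField 𝕜] (M C : Matrix ι ι 𝕜)
    (t : 𝕜) :
    HasDerivAt (fun s => (M + s • C).det) (adjugate (M + t • C) * C).trace t := by
  have hentry : ∀ i j, HasDerivAt (fun s => (M + s • C) i j) (C i j) t := fun i j => by
    simpa using ((hasDerivAt_id t).smul_const (C i j)).const_add (M i j)
  rw [← sum_det_updateCol_eq_trace_adjugate_mul]
  simp only [det_apply, Finset.sum_comm (γ := ι), prod_updateCol_perm, ← Finset.smul_sum]
  refine HasDerivAt.fun_sum fun σ _ => HasDerivAt.const_smul _ ?_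
  simpa [smul_eq_mul] using HasDerivAt.fun_finsetProd (u := Finset.univ) fun k _ => hentry (σ k) k

end Matrix

theorem frobInner_cof {n : ℕ} (M C : Matrix (Fin n) (Fin n) ℝ) :
    frobInner (cof M) C = (adjugate M * C).trace := by
  simp only [frobInner, cof, transpose_apply, trace, diag, mul_apply]
  exact Finset.sum_comm

theorem mean_value_det_general (n : ℕ) (A B : Matrix (Fin n) (Fin n) ℝ) :
    ∃ t ∈ Set.Icc (0 : ℝ) 1,
      A.det - B.det = frobInner (cof (t • A + (1 - t) • B)) (A - B) := by
  have hline : ∀ s : ℝ, B + s • (A - B) = s • A + (1 - s) • B := fun s => by module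
  have hderiv : ∀ s : ℝ, HasDerivAt (fun s : ℝ => (B + s • (A - B)).det)
      (frobInner (cof (s • A + (1 - s) • B)) (A - B)) s := fun s => by
    simpa only [frobInner_cof, hline] using hasDerivAt_det_add_smul B (A - B) s
  obtain ⟨t, ht, hslope⟩ := exists_hasDerivAt_eq_slope _ _ one_pos
    (fun s _ => (hderiv s).continuousAt.continuousWithinAt) (fun s _ => hderiv s)
  refine ⟨t, Set.Ioo_subset_Icc_self ht, ?_⟩
  simpa [hline] using hslope.symm

theorem mean_value_det (n : ℕ) (hn : 1 ≤ n) (A B : Matrix (Fin n) (Fin n) ℝ) :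
    ∃ t ∈ Set.Icc (0 : ℝ) 1,
      A.det - B.det = frobInner (cof (t • A + (1 - t) • B)) (A - B) :=
  mean_value_det_general n A B
end

section
/- Let A be a real symmetric n×n matrix (n ≥ 1) and let 0 < m′ ≤ M′ be such that every eigenvalue λ of A satisfies m′ ≤ λ ≤ M′. Then for every vector z ∈ ℝⁿ, ((m′)ⁿ/M′) ‖z‖² ≤ zᵀ (cof A) z ≤ ((M′)ⁿ/m′) ‖z‖², where cof A denotes the cofactor matrix of A and ‖·‖ the Euclidean norm. -/
open Matrix

/-
The Hermitian matrix A is orthogonally diagonalised, A = U diag(λ) Uᵀ. Conjugation by an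
orthogonal U commutes with taking the adjugate, so cof A = adj A = U diag(μ) Uᵀ with
μᵢ = ∏_{j ≠ i} λⱼ = det A / λᵢ ∈ [m'ⁿ/M', M'ⁿ/m']. The quadratic form of U diag(μ) Uᵀ is
∑ μᵢ wᵢ² with w = Uᵀz and ‖w‖ = ‖z‖.
-/

open Finset Unitary

namespace Matrix

variable {n R : Type*} [Fintype n]

theorem adjugate_of_mem_unitaryGroup [DecidableEq n] [CommRing R] [StarRing R] {U : Matrix n n R}
    (hU : U ∈ unitaryGroup n R) : adjugate U = det U • star U :=
  calc adjugate U = star U * U * adjugate U := by rw [(mem_unitaryGroup_iff').mp hU, one_mul]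
    _ = det U • star U := by rw [mul_assoc, mul_adjugate, Matrix.mul_smul, mul_one]

theorem adjugate_conjStarAlgAut [DecidableEq n] [CommRing R] [StarRing R] (U : unitaryGroup n R)
    (B : Matrix n n R) :
    adjugate (conjStarAlgAut R _ U B) = conjStarAlgAut R _ U (adjugate B) := by
  have hdet : det (U : Matrix n n R) * det (star (U : Matrix n n R)) = 1 := by
    rw [← det_mul, (mem_unitaryGroup_iff).mp U.2, det_one]
  rw [conjStarAlgAut_apply, conjStarAlgAut_apply, adjugate_mul_distrib, adjugate_mul_distrib,
    adjugate_of_mem_unitaryGroup U.2, adjugate_of_mem_unitaryGroup (star_mem U.2), star_star]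
  simp only [smul_mul, Matrix.mul_smul, smul_smul, hdet, one_smul, mul_assoc]

section TrivialStar

variable [CommRing R] [StarRing R] [TrivialStar R]

theorem vecMul_eq_star_mulVec (U : Matrix n n R) (z : n → R) : z ᵥ* U = star U *ᵥ z := by
  rw [star_eq_conjTranspose, conjTranspose_eq_transpose_of_trivial, mulVec_transpose]

variable [DecidableEq n]

theorem dotProduct_mulVec_conj_diagonal (U : Matrix n n R) (d z : n → R) :
    z ⬝ᵥ (U * diagonal d * star U) *ᵥ z = ∑ i, d i * (star U *ᵥ z) i ^ 2 := by
  rw [← mulVec_mulVec, ← mulVec_mulVec, dotProduct_mulVec, vecMul_eq_star_mulVec]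
  simp only [dotProduct, mulVec_diagonal]
  exact sum_congr rfl fun i _ => by ring

theorem sum_sq_star_mulVec_of_mem_unitaryGroup {U : Matrix n n R} (hU : U ∈ unitaryGroup n R)
    (z : n → R) : ∑ i, (star U *ᵥ z) i ^ 2 = ∑ i, z i ^ 2 := by
  have : (star U *ᵥ z) ⬝ᵥ (star U *ᵥ z) = z ⬝ᵥ z :=
    calc (star U *ᵥ z) ⬝ᵥ (star U *ᵥ z) = (z ᵥ* U) ⬝ᵥ (star U *ᵥ z) := by
          rw [vecMul_eq_star_mulVec]
      _ = z ⬝ᵥ z := by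
          rw [← dotProduct_mulVec, mulVec_mulVec, (mem_unitaryGroup_iff).mp hU, one_mulVec]
  simpa only [dotProduct, sq] using this

theorem dotProduct_mulVec_conj_diagonal_bounds [LinearOrder R] [IsStrictOrderedRing R]
    {U : Matrix n n R} (hU : U ∈ unitaryGroup n R) {d : n → R} {a b : R}
    (hd : ∀ i, a ≤ d i ∧ d i ≤ b) (z : n → R) :
    a * ∑ i, z i ^ 2 ≤ z ⬝ᵥ (U * diagonal d * star U) *ᵥ z ∧
      z ⬝ᵥ (U * diagonal d * star U) *ᵥ z ≤ b * ∑ i, z i ^ 2 := by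
  rw [dotProduct_mulVec_conj_diagonal, ← sum_sq_star_mulVec_of_mem_unitaryGroup hU z, mul_sum,
    mul_sum]
  exact ⟨sum_le_sum fun i _ => by gcongr; exact (hd i).1,
    sum_le_sum fun i _ => by gcongr; exact (hd i).2⟩

end TrivialStar

end Matrix

theorem Finset.prod_erase_bounds {ι K : Type*} [Fintype ι] [DecidableEq ι] [Field K]
    [LinearOrder K] [IsStrictOrderedRing K] {f : ι → K} {a b : K} (ha : 0 < a)
    (hf : ∀ j, a ≤ f j ∧ f j ≤ b) (i : ι) :
    a ^ Fintype.card ι / b ≤ ∏ j ∈ univ.erase i, f j ∧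
      ∏ j ∈ univ.erase i, f j ≤ b ^ Fintype.card ι / a := by
  have hf0 : ∀ j, 0 ≤ f j := fun j => ha.le.trans (hf j).1
  have hprod : ∏ j ∈ univ.erase i, f j = (∏ j, f j) / f i := by
    rw [eq_div_iff (ha.trans_le (hf i).1).ne', mul_comm, mul_prod_erase _ _ (mem_univ i)]
  have hlow : a ^ Fintype.card ι ≤ ∏ j, f j := by
    rw [← card_univ, ← prod_const]
    exact prod_le_prod (fun _ _ => ha.le) fun j _ => (hf j).1
  have hup : ∏ j, f j ≤ b ^ Fintype.card ι := by
    rw [← card_univ, ← prod_const]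
    exact prod_le_prod (fun j _ => hf0 j) fun j _ => (hf j).2
  rw [hprod]
  exact ⟨div_le_div₀ (prod_nonneg fun j _ => hf0 j) hlow (ha.trans_le (hf i).1) (hf i).2,
    div_le_div₀ (hup.trans' (prod_nonneg fun j _ => hf0 j)) hup ha (hf i).1⟩

theorem cof_eq_adjugate {n : ℕ} {A : Matrix (Fin n) (Fin n) ℝ} (hA : A.IsHermitian) :
    cof A = adjugate A :=
  (isHermitian_iff_isSymm.mp hA.adjugate).eq

theorem Matrix.IsHermitian.cof_eq {n : ℕ} {A : Matrix (Fin n) (Fin n) ℝ} (hA : A.IsHermitian) :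
    cof A = hA.eigenvectorUnitary * diagonal (fun i => ∏ j ∈ univ.erase i, hA.eigenvalues j) *
      star (hA.eigenvectorUnitary : Matrix (Fin n) (Fin n) ℝ) := by
  have hspec : A = conjStarAlgAut ℝ _ hA.eigenvectorUnitary (diagonal hA.eigenvalues) := by
    simpa only [RCLike.ofReal_real_eq_id, Function.id_comp] using hA.spectral_theorem
  calc cof A = Matrix.adjugate A := cof_eq_adjugate hA
    _ = Matrix.adjugate (conjStarAlgAut ℝ _ hA.eigenvectorUnitary (diagonal hA.eigenvalues)) :=
      congrArg Matrix.adjugate hspec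
    _ = _ := by rw [adjugate_conjStarAlgAut, adjugate_diagonal, conjStarAlgAut_apply]

theorem cof_quadratic_form_bounds_general (n : ℕ)
    (A : Matrix (Fin n) (Fin n) ℝ) (hA : A.IsHermitian)
    (m' M' : ℝ) (hm' : 0 < m')
    (heig : ∀ i, m' ≤ hA.eigenvalues i ∧ hA.eigenvalues i ≤ M')
    (z : Fin n → ℝ) :
    m' ^ n / M' * ∑ i, (z i) ^ 2 ≤ z ⬝ᵥ (cof A).mulVec z ∧
      z ⬝ᵥ (cof A).mulVec z ≤ M' ^ n / m' * ∑ i, (z i) ^ 2 := by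
  have hμ := prod_erase_bounds hm' heig
  rw [Fintype.card_fin] at hμ
  rw [hA.cof_eq]
  exact dotProduct_mulVec_conj_diagonal_bounds hA.eigenvectorUnitary.2 hμ z

theorem cof_quadratic_form_bounds (n : ℕ) (hn : 1 ≤ n)
    (A : Matrix (Fin n) (Fin n) ℝ) (hA : A.IsHermitian)
    (m' M' : ℝ) (hm' : 0 < m') (hmM : m' ≤ M')
    (heig : ∀ i, m' ≤ hA.eigenvalues i ∧ hA.eigenvalues i ≤ M')
    (z : Fin n → ℝ) :
    m' ^ n / M' * ∑ i, (z i) ^ 2 ≤ z ⬝ᵥ (cof A).mulVec z ∧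
      z ⬝ᵥ (cof A).mulVec z ≤ M' ^ n / m' * ∑ i, (z i) ^ 2 :=
  cof_quadratic_form_bounds_general n A hA m' M' hm' heig z
end
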